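/- arXiv:1812.02444 — 6 statements merged into one kernel-verified Lean document; each statement's English description precedes it below -/
import Mathlib

section
/- Let $p\in\mathcal{P}^n[\mathbf{X}]$ with interpolation data $y_r = p(\mathbf{x}_r)$, and suppose there exists $\mathbf{z}\in\mathbb{K}$ with $p(\mathbf{z}) < 0$. Then $G(tL(\mathbf{z})) \to -\infty$ as $t\to+\infty$; in particular $G$ is not bounded below on the asymptotic cone. -/
open MvPolynomial Matrix BigOperators

/-- Multi-indices `α` with `|α| ≤ m`, each component bounded by `m`. -/
def MIdx (d m : ℕ) : Type := {α : Fin d → Fin (m + 1) // ∑ i, ((α i : ℕ)) ≤ m}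

noncomputable instance (d m : ℕ) : Fintype (MIdx d m) := Subtype.fintype _
instance (d m : ℕ) : DecidableEq (MIdx d m) := Subtype.instDecidableEq

/-- The monomial `X^α` associated with a multi-index. -/
noncomputable def monIdx {d m : ℕ} (α : MIdx d m) : MvPolynomial (Fin d) ℝ :=
  ∏ i, (X i) ^ ((α.1 i : ℕ))

/-- The block-diagonal polynomial-valued localizing matrix
`B(X) = diag (g_1(X) D^{n_1}(X), …, g_{j*}(X) D^{n_{j*}}(X))`,
with `D^{n_j}(X)_{αβ} = X^α X^β`. -/
noncomputable def BPoly {d js : ℕ} (g : Fin js → MvPolynomial (Fin d) ℝ)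
    (nj : Fin js → ℕ) :
    Matrix ((j : Fin js) × MIdx d (nj j)) ((j : Fin js) × MIdx d (nj j))
      (MvPolynomial (Fin d) ℝ) :=
  fun p q => if p.1 = q.1 then g p.1 * monIdx p.2 * monIdx q.2 else 0

/-- Evaluation `B(x)` of the localizing matrix at a point. -/
noncomputable def BEval {d js : ℕ} (g : Fin js → MvPolynomial (Fin d) ℝ)
    (nj : Fin js → ℕ) (x : Fin d → ℝ) :
    Matrix ((j : Fin js) × MIdx d (nj j)) ((j : Fin js) × MIdx d (nj j)) ℝ :=
  fun p q => eval x (BPoly g nj p q)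


/-- `M(λ) = I + ∑ r λ_r B_r`. -/
noncomputable def Mmat {rs : ℕ} {ι : Type*} [Fintype ι] [DecidableEq ι]
    (B : Fin rs → Matrix ι ι ℝ) (lam : Fin rs → ℝ) : Matrix ι ι ℝ :=
  1 + ∑ r, lam r • B r

/-- The dual function `G(λ) = tr(M(λ)⁻¹) + ⟨λ, y⟩`. -/
noncomputable def Gfun {rs : ℕ} {ι : Type*} [Fintype ι] [DecidableEq ι]
    (B : Fin rs → Matrix ι ι ℝ) (y : Fin rs → ℝ) (lam : Fin rs → ℝ) : ℝ :=
  (Mmat B lam)⁻¹.trace + ∑ r, y r * lam r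

/-
Along the ray `t ↦ t L(z)` the localizing matrices combine, by Lagrange interpolation of their
entries (polynomials of degree `≤ n`), into `t B(z)`, which is positive semidefinite because
`z ∈ K`. Hence `M(t L(z)) = I + t B(z) ⪰ I`, so the trace term of `G` stays bounded by the
matrix size, while the linear term equals `t p(z)`, again by interpolation, and tends to `-∞`.
-/

section Interpolation

variable {σ ι κ : Type*} [Fintype ι] {n : ℕ} {xr : ι → σ → ℝ} {l : ι → MvPolynomial σ ℝ}

theorem eval_eq_sum_eval_mul_eval_of_interpolation
    (huni : ∀ p : MvPolynomial σ ℝ, p.totalDegree ≤ n → p = ∑ r, C (eval (xr r) p) * l r)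
    {q : MvPolynomial σ ℝ} (hq : q.totalDegree ≤ n) (z : σ → ℝ) :
    ∑ r, eval z (l r) * eval (xr r) q = eval z q := by
  conv_rhs => rw [huni q hq]
  simp only [map_sum, eval_mul, eval_C, mul_comm]

theorem sum_smul_map_eval_eq_map_eval_of_interpolation
    (huni : ∀ p : MvPolynomial σ ℝ, p.totalDegree ≤ n → p = ∑ r, C (eval (xr r) p) * l r)
    {P : Matrix κ κ (MvPolynomial σ ℝ)} (hP : ∀ i j, (P i j).totalDegree ≤ n) (z : σ → ℝ) :
    ∑ r, eval z (l r) • P.map (eval (xr r)) = P.map (eval z) := by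
  ext i j
  simp only [Matrix.sum_apply, Matrix.smul_apply, Matrix.map_apply, smul_eq_mul]
  exact eval_eq_sum_eval_mul_eval_of_interpolation huni (hP i j) z

end Interpolation

section LocalizingMatrix

variable {d js : ℕ}

theorem totalDegree_monIdx_le {m : ℕ} (α : MIdx d m) : (monIdx α).totalDegree ≤ m := by
  refine (totalDegree_finsetProd _ _).trans ?_
  simpa only [totalDegree_X_pow] using α.2

theorem totalDegree_BPoly_le {n : ℕ} (g : Fin js → MvPolynomial (Fin d) ℝ)
    (hgn : ∀ j, (g j).totalDegree ≤ n) (nj : Fin js → ℕ)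
    (hnj : ∀ j, nj j = (n - (g j).totalDegree) / 2) (a b : (j : Fin js) × MIdx d (nj j)) :
    (BPoly g nj a b).totalDegree ≤ n := by
  unfold BPoly
  split_ifs with hab
  · have ha := totalDegree_monIdx_le a.2
    have hb := totalDegree_monIdx_le b.2
    have hga := hgn a.1
    have hna := hnj a.1
    have hnb : nj b.1 = (n - (g a.1).totalDegree) / 2 := hab ▸ hnj b.1
    calc (g a.1 * monIdx a.2 * monIdx b.2).totalDegree
        ≤ (g a.1).totalDegree + (monIdx a.2).totalDegree + (monIdx b.2).totalDegree :=
          (totalDegree_mul _ _).trans (Nat.add_le_add_right (totalDegree_mul _ _) _)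
      _ ≤ n := by omega
  · simp

theorem BEval_posSemidef (g : Fin js → MvPolynomial (Fin d) ℝ) (nj : Fin js → ℕ)
    {x : Fin d → ℝ} (hx : ∀ j, 0 ≤ eval x (g j)) : (BEval g nj x).PosSemidef := by
  let E : Matrix (Fin js) ((j : Fin js) × MIdx d (nj j)) ℝ :=
    Matrix.of fun j a => if a.1 = j then √(eval x (g j)) * eval x (monIdx a.2) else 0
  have hE : BEval g nj x = Eᴴ * E := by
    ext ⟨j, α⟩ ⟨k, β⟩
    simp only [E, BEval, BPoly, Matrix.mul_apply, conjTranspose_apply, of_apply, star_trivial,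
      ite_mul, mul_ite, zero_mul, mul_zero, Finset.sum_ite_eq, Finset.mem_univ, if_true]
    split_ifs with hjk
    · subst hjk
      rw [eval_mul, eval_mul]
      linear_combination -(eval x (monIdx α) * eval x (monIdx β)) * Real.mul_self_sqrt (hx j)
    · simp
  exact hE ▸ posSemidef_conjTranspose_mul_self E

end LocalizingMatrix

section DualFunction

variable {ι : Type*} {rs : ℕ} {B : Fin rs → Matrix ι ι ℝ} {c : Fin rs → ℝ} {A : Matrix ι ι ℝ}

theorem sum_mul_smul_eq_smul (hBA : ∑ r, c r • B r = A) (t : ℝ) :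
    ∑ r, (t * c r) • B r = t • A := by
  simp only [← hBA, Finset.smul_sum, smul_smul]

variable [Fintype ι] [DecidableEq ι]

/-- `I - (I + A)⁻¹ = (I + A)⁻¹ (A + A²) (I + A)⁻¹` exhibits `(I + A)⁻¹ ⪯ I`. -/
theorem Matrix.PosSemidef.trace_inv_one_add_le (hA : A.PosSemidef) :
    (1 + A)⁻¹.trace ≤ Fintype.card ι := by
  set M : Matrix ι ι ℝ := 1 + A
  have hM : M.PosDef := PosDef.one.add_posSemidef hA
  have hdet : IsUnit M.det := hM.det_pos.ne'.isUnit
  have hkey : 1 - M⁻¹ = M⁻¹ * (A + A * A) * M⁻¹ᴴ := by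
    rw [hM.isHermitian.inv, show A + A * A = A * M by simp [M, mul_add], ← Matrix.mul_assoc,
      Matrix.mul_assoc (M⁻¹ * A), mul_nonsing_inv M hdet, mul_one,
      show A = M - 1 by simp [M], mul_sub, nonsing_inv_mul M hdet, mul_one]
  have hAA : (A + A * A).PosSemidef := by
    refine hA.add ?_
    simpa only [hA.isHermitian.eq] using posSemidef_conjTranspose_mul_self A
  have := (hkey ▸ hAA.mul_mul_conjTranspose_same M⁻¹).trace_nonneg
  rwa [trace_sub, trace_one, sub_nonneg] at this

theorem Gfun_mul_le (hA : A.PosSemidef) (hBA : ∑ r, c r • B r = A) (y : Fin rs → ℝ)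
    {t : ℝ} (ht : 0 ≤ t) :
    Gfun B y (fun r => t * c r) ≤ Fintype.card ι + t * ∑ r, y r * c r := by
  rw [Gfun, Mmat, sum_mul_smul_eq_smul hBA, Finset.mul_sum]
  exact add_le_add (hA.smul ht).trace_inv_one_add_le (Finset.sum_congr rfl fun r _ => by ring).le

theorem tendsto_Gfun_mul_atBot (hA : A.PosSemidef) (hBA : ∑ r, c r • B r = A)
    {y : Fin rs → ℝ} (hy : ∑ r, y r * c r < 0) :
    Filter.Tendsto (fun t => Gfun B y (fun r => t * c r)) Filter.atTop Filter.atBot := by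
  refine Filter.tendsto_atBot_mono' _ ?_ <| Filter.tendsto_atBot_add_const_left _
    (Fintype.card ι : ℝ) <| Filter.tendsto_id.atTop_mul_const_of_neg hy
  filter_upwards [Filter.eventually_ge_atTop 0] with t ht
  exact Gfun_mul_le hA hBA y ht

end DualFunction

theorem not_bddBelow_image_of_tendsto_atBot {α β : Type*} {l : Filter β} [l.NeBot]
    {f : α → ℝ} {γ : β → α} {S : Set α} (hf : Filter.Tendsto (f ∘ γ) l Filter.atBot)
    (hγ : ∀ᶠ t in l, γ t ∈ S) : ¬BddBelow (f '' S) := by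
  rintro ⟨m, hm⟩
  obtain ⟨t, htS, htm⟩ := (hγ.and (hf.eventually (Filter.eventually_lt_atBot m))).exists
  exact (hm ⟨γ t, htS, rfl⟩).not_gt htm

theorem G_unbounded_below_if_p_negative_somewhere_general
    (d js n rs : ℕ)
    (g : Fin js → MvPolynomial (Fin d) ℝ)
    (hgn : ∀ j, (g j).totalDegree ≤ n)
    (nj : Fin js → ℕ) (hnj : ∀ j, nj j = (n - (g j).totalDegree) / 2)
    (xr : Fin rs → Fin d → ℝ)
    (l : Fin rs → MvPolynomial (Fin d) ℝ)
    (huni : ∀ p : MvPolynomial (Fin d) ℝ, p.totalDegree ≤ n →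
      p = ∑ r, C (eval (xr r) p) * l r)
    (p : MvPolynomial (Fin d) ℝ) (hpdeg : p.totalDegree ≤ n)
    (z : Fin d → ℝ) (hz : ∀ j, 0 ≤ eval z (g j)) (hneg : eval z p < 0) :
    Filter.Tendsto
        (fun t : ℝ =>
          Gfun (fun r => BEval g nj (xr r)) (fun r => eval (xr r) p)
            (fun r => t * eval z (l r)))
        Filter.atTop Filter.atBot ∧
    ¬ BddBelow
        ((fun lam => Gfun (fun r => BEval g nj (xr r)) (fun r => eval (xr r) p) lam) ''
          {lam : Fin rs → ℝ | (∑ r, lam r • BEval g nj (xr r)).PosSemidef}) := by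
  have hBz : ∑ r, eval z (l r) • BEval g nj (xr r) = BEval g nj z :=
    sum_smul_map_eval_eq_map_eval_of_interpolation huni (totalDegree_BPoly_le g hgn nj hnj) z
  have hpz : ∑ r, eval (xr r) p * eval z (l r) = eval z p := by
    simpa only [mul_comm] using eval_eq_sum_eval_mul_eval_of_interpolation huni hpdeg z
  have hA := BEval_posSemidef g nj hz
  have hT := tendsto_Gfun_mul_atBot hA hBz (hpz ▸ hneg)
  refine ⟨hT, not_bddBelow_image_of_tendsto_atBot hT ?_⟩
  filter_upwards [Filter.eventually_ge_atTop 0] with t ht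
  rw [sum_mul_smul_eq_smul hBz]
  exact hA.smul ht

theorem G_unbounded_below_if_p_negative_somewhere
    (d js n rs : ℕ)
    (g : Fin js → MvPolynomial (Fin d) ℝ)
    (hgn : ∀ j, (g j).totalDegree ≤ n)
    (nj : Fin js → ℕ) (hnj : ∀ j, nj j = (n - (g j).totalDegree) / 2)
    (xr : Fin rs → Fin d → ℝ)
    (hxK : ∀ r, ∀ j, 0 ≤ eval (xr r) (g j))
    (l : Fin rs → MvPolynomial (Fin d) ℝ)
    (hldeg : ∀ r, (l r).totalDegree ≤ n)
    (hdelta : ∀ r s, eval (xr s) (l r) = if r = s then (1 : ℝ) else 0)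
    (huni : ∀ p : MvPolynomial (Fin d) ℝ, p.totalDegree ≤ n →
      p = ∑ r, C (eval (xr r) p) * l r)
    (p : MvPolynomial (Fin d) ℝ) (hpdeg : p.totalDegree ≤ n)
    (z : Fin d → ℝ) (hz : ∀ j, 0 ≤ eval z (g j)) (hneg : eval z p < 0) :
    Filter.Tendsto
        (fun t : ℝ =>
          Gfun (fun r => BEval g nj (xr r)) (fun r => eval (xr r) p)
            (fun r => t * eval z (l r)))
        Filter.atTop Filter.atBot ∧
    ¬ BddBelow
        ((fun lam => Gfun (fun r => BEval g nj (xr r)) (fun r => eval (xr r) p) lam) ''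
          {lam : Fin rs → ℝ | (∑ r, lam r • BEval g nj (xr r)).PosSemidef}) :=
  G_unbounded_below_if_p_negative_somewhere_general d js n rs g hgn nj hnj xr l huni p hpdeg z hz
    hneg
end

section
/- (Strict convexity.) Assume the matrices $B_1,\dots,B_{r_*}$ are linearly independent symmetric matrices. Then for every $\lambda\in\mathcal{D}$, the Hessian of $G(\lambda) = \mathrm{tr}(M(\lambda)^{-1}) + \langle\lambda,y\rangle$ is positive definite; hence $G$ is strictly convex on $\mathcal{D}$. -/
/-!
Along the line `s ↦ λ + s μ` the matrix `M = I + ∑ λ_r B_r` moves as `C + s N` with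
`N = ∑ μ_r B_r`, and differentiating `(C + s N)⁻¹` twice gives the Hessian
`2 tr(W N W N W)` with `W = M⁻¹`. Writing `W N W N W = (N W)ᴴ W (N W)`, this is the trace of a
positive semidefinite matrix which vanishes only if `N W = 0`, i.e. only if `N = 0`; linear
independence of the `B_r` rules this out for `μ ≠ 0`. Strict convexity on the convex set
`{λ | M(λ) ≻ 0}` then follows by restricting to segments, where the second derivative is
this Hessian.
-/

open Filter Matrix Set Topology

theorem deriv2_eq_of_hasDerivAt {𝕜 F : Type*} [NontriviallyNormedField 𝕜] [NormedAddCommGroup F]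
    [NormedSpace 𝕜 F] {φ ψ : 𝕜 → F} {a : F} {t : 𝕜}
    (hφ : ∀ᶠ s in 𝓝 t, HasDerivAt φ (ψ s) s) (hψ : HasDerivAt ψ a t) :
    deriv^[2] φ t = a := by
  have hd : deriv φ =ᶠ[𝓝 t] ψ := hφ.mono fun s hs => hs.deriv
  show deriv (deriv φ) t = a
  rw [hd.deriv_eq, hψ.deriv]

theorem deriv2_comp_add_smul {𝕜 E F : Type*} [NontriviallyNormedField 𝕜] [NormedAddCommGroup E]
    [NormedSpace 𝕜 E] [NormedAddCommGroup F] [NormedSpace 𝕜 F] {f : E → F} {x v : E} {t : 𝕜}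
    (hf : ContDiffAt 𝕜 2 f (x + t • v)) :
    deriv^[2] (fun s => f (x + s • v)) t = iteratedFDeriv 𝕜 2 f (x + t • v) (fun _ => v) := by
  have hline : ∀ s : 𝕜, HasDerivAt (fun s : 𝕜 => x + s • v) v s := fun s => by
    simpa using ((hasDerivAt_id s).smul_const v).const_add x
  have hnear : ∀ᶠ s in 𝓝 t, ContDiffAt 𝕜 2 f (x + s • v) :=
    (hline t).continuousAt.eventually (hf.eventually (by simp))
  refine deriv2_eq_of_hasDerivAt (ψ := fun s => fderiv 𝕜 f (x + s • v) v)
    (hnear.mono fun s hs => ?_) ?_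
  · exact (hs.differentiableAt (by simp)).hasFDerivAt.comp_hasDerivAt s (hline s)
  · have hf' : DifferentiableAt 𝕜 (fderiv 𝕜 f) (x + t • v) :=
      (hf.fderiv_right (m := 1) (by norm_num)).differentiableAt (by simp)
    have hderiv : HasDerivAt (fun s => fderiv 𝕜 f (x + s • v))
        (fderiv 𝕜 (fderiv 𝕜 f) (x + t • v) v) t :=
      hf'.hasFDerivAt.comp_hasDerivAt t (hline t)
    rw [iteratedFDeriv_two_apply]
    simpa using hderiv.clm_apply (hasDerivAt_const t v)

theorem strictConvexOn_of_iteratedFDeriv_two_pos {E : Type*} [NormedAddCommGroup E]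
    [NormedSpace ℝ E] {s : Set E} {f : E → ℝ} (hs : Convex ℝ s)
    (hf : ∀ x ∈ s, ContDiffAt ℝ 2 f x)
    (hf'' : ∀ x ∈ s, ∀ v ≠ 0, 0 < iteratedFDeriv ℝ 2 f x (fun _ => v)) :
    StrictConvexOn ℝ s f := by
  refine ⟨hs, fun x hx z hz hxz a b ha hb hab => ?_⟩
  have hseg : ∀ t ∈ Icc (0 : ℝ) 1, x + t • (z - x) ∈ s := fun t ht =>
    hs.add_smul_sub_mem hx hz ht
  have hg : StrictConvexOn ℝ (Icc 0 1) fun t : ℝ => f (x + t • (z - x)) := by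
    refine strictConvexOn_of_deriv2_pos (convex_Icc 0 1) (fun t ht => ?_) fun t ht => ?_
    · have hline : Continuous fun t : ℝ => x + t • (z - x) := by fun_prop
      exact (ContinuousAt.comp (f := fun t : ℝ => x + t • (z - x))
        (hf _ (hseg t ht)).continuousAt hline.continuousAt).continuousWithinAt
    · rw [interior_Icc] at ht
      rw [deriv2_comp_add_smul (hf _ (hseg t (Ioo_subset_Icc_self ht)))]
      exact hf'' _ (hseg t (Ioo_subset_Icc_self ht)) _ (sub_ne_zero.mpr hxz.symm)
  have hmid := hg.2 (left_mem_Icc.mpr zero_le_one) (right_mem_Icc.mpr zero_le_one) zero_ne_one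
    ha hb hab
  have hcomb : x + b • (z - x) = a • x + b • z := by
    rw [eq_sub_of_add_eq hab]
    module
  simpa [hcomb] using hmid

namespace Matrix

open scoped ComplexOrder

variable {m n 𝕜 : Type*} [RCLike 𝕜]

theorem PosDef.trace_conjTranspose_mul_mul_pos [Fintype m] [Fintype n] {A : Matrix n n 𝕜}
    {B : Matrix n m 𝕜} (hA : A.PosDef) (hB : B ≠ 0) : 0 < (Bᴴ * A * B).trace := by
  have hpsd := hA.posSemidef.conjTranspose_mul_mul_same B
  refine hpsd.trace_nonneg.lt_of_ne fun h0 => hB ?_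
  have hzero := hpsd.trace_eq_zero_iff.mp h0.symm
  classical
  ext i j
  by_contra hne
  have hcol : B *ᵥ Pi.single j 1 ≠ 0 := fun h => hne (by simpa using congrFun h i)
  have hpos := hA.dotProduct_mulVec_pos hcol
  simp only [star_mulVec, dotProduct_mulVec, vecMul_vecMul, hzero] at hpos
  simp at hpos

theorem PosDef.trace_mul_mul_mul_mul_pos [Fintype n] [DecidableEq n] {W N : Matrix n n 𝕜}
    (hW : W.PosDef) (hN : N.IsHermitian) (hN0 : N ≠ 0) : 0 < (W * N * W * N * W).trace := by
  have hNW : N * W ≠ 0 := fun h => hN0 (hW.isUnit.mul_left_eq_zero.mp h)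
  have hconj : (N * W)ᴴ * W * (N * W) = W * N * W * N * W := by
    rw [conjTranspose_mul, hW.isHermitian.eq, hN.eq]
    simp only [Matrix.mul_assoc]
  simpa only [hconj] using hW.trace_conjTranspose_mul_mul_pos hNW

theorem convex_setOf_posDef : Convex ℝ {A : Matrix n n 𝕜 | A.PosDef} := by
  intro A hA B hB a b ha hb hab
  rcases ha.eq_or_lt with rfl | ha
  · simpa [show b = 1 by linarith] using hB
  · exact (hA.smul ha).add_posSemidef (hB.posSemidef.smul hb)

theorem convex_setOf_posDef_add_sum_smul {ι : Type*} [Fintype ι] (A : Matrix n n 𝕜)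
    (B : ι → Matrix n n 𝕜) : Convex ℝ {l : ι → ℝ | (A + ∑ r, l r • B r).PosDef} := by
  let M : (ι → ℝ) →ᵃ[ℝ] Matrix n n 𝕜 :=
    AffineMap.const ℝ (ι → ℝ) A + (Fintype.linearCombination ℝ B).toAffineMap
  have hM : {l : ι → ℝ | (A + ∑ r, l r • B r).PosDef} = M ⁻¹' {P | P.PosDef} := by
    ext l
    simp [M, Fintype.linearCombination_apply]
  rw [hM]
  exact convex_setOf_posDef.affine_preimage M

end Matrix

section MatrixCalculus

variable {𝕜 n ι : Type*} [RCLike 𝕜] [Fintype n] [DecidableEq n]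

-- Matrices carry no global norm; all norms agree on derivatives, and this one makes them a
-- normed algebra, as the calculus of `Ring.inverse` requires.
attribute [local instance] Matrix.linftyOpNormedRing Matrix.linftyOpNormedAlgebra

theorem HasDerivAt.matrix_inv {f : 𝕜 → Matrix n n 𝕜} {f' : Matrix n n 𝕜} {t : 𝕜}
    (hf : HasDerivAt f f' t) (ht : IsUnit (f t)) :
    HasDerivAt (fun s => (f s)⁻¹) (-((f t)⁻¹ * f' * (f t)⁻¹)) t := by
  obtain ⟨u, hu⟩ := ht
  have h : HasFDerivAt Ring.inverse
      (-ContinuousLinearMap.mulLeftRight 𝕜 (Matrix n n 𝕜) (f t)⁻¹ (f t)⁻¹) (f t) := by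
    simpa only [← hu, coe_units_inv] using hasFDerivAt_ringInverse (𝕜 := 𝕜) u
  simp only [nonsing_inv_eq_ringInverse] at h ⊢
  exact h.comp_hasDerivAt t hf

theorem HasDerivAt.matrix_trace {f : 𝕜 → Matrix n n 𝕜} {f' : Matrix n n 𝕜} {t : 𝕜}
    (hf : HasDerivAt f f' t) : HasDerivAt (fun s => (f s).trace) f'.trace t :=
  (traceLinearMap n 𝕜 𝕜).toContinuousLinearMap.hasFDerivAt.comp_hasDerivAt t hf

theorem ContDiffAt.matrix_inv {E : Type*} [NormedAddCommGroup E] [NormedSpace 𝕜 E]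
    {f : E → Matrix n n 𝕜} {x : E} {k : WithTop ℕ∞} (hf : ContDiffAt 𝕜 k f x)
    (hx : IsUnit (f x)) : ContDiffAt 𝕜 k (fun y => (f y)⁻¹) x := by
  obtain ⟨u, hu⟩ := hx
  have h : ContDiffAt 𝕜 k Ring.inverse (f x) := hu ▸ contDiffAt_ringInverse 𝕜 u
  simp only [nonsing_inv_eq_ringInverse]
  exact h.comp x hf

theorem hasDerivAt_inv_add_smul (C N : Matrix n n 𝕜) {t : 𝕜} (ht : IsUnit (C + t • N)) :
    HasDerivAt (fun s => (C + s • N)⁻¹) (-((C + t • N)⁻¹ * N * (C + t • N)⁻¹)) t := by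
  have hline := ((hasDerivAt_id' t).smul_const N).const_add C
  rw [one_smul] at hline
  exact hline.matrix_inv ht

theorem deriv2_trace_inv_add_smul_add (C N : Matrix n n 𝕜) (c d : 𝕜) (hC : IsUnit C) :
    deriv^[2] (fun s => (C + s • N)⁻¹.trace + (c + s * d)) 0
      = 2 * (C⁻¹ * N * C⁻¹ * N * C⁻¹).trace := by
  have hunit : ∀ᶠ s in 𝓝 (0 : 𝕜), IsUnit (C + s • N) := by
    have hcont : Continuous fun s : 𝕜 => C + s • N := by fun_prop
    exact hcont.continuousAt.preimage_mem_nhds (Units.isOpen.mem_nhds (by simpa using hC))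
  refine deriv2_eq_of_hasDerivAt
    (ψ := fun s => -((C + s • N)⁻¹ * N * (C + s • N)⁻¹).trace + d) (hunit.mono fun s hs => ?_) ?_
  · have h := ((hasDerivAt_inv_add_smul C N hs).matrix_trace).fun_add
      (((hasDerivAt_id s).mul_const d).const_add c)
    exact h.congr_deriv (by simp [trace_neg])
  · have hR := hasDerivAt_inv_add_smul C N (t := 0) (by simpa using hC)
    have h := ((((hR.mul_const N).fun_mul hR).matrix_trace).fun_neg).add_const d
    convert h using 1
    simp only [zero_smul, add_zero, neg_mul, mul_neg, trace_neg, trace_add, Matrix.mul_assoc]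
    ring

variable [Fintype ι]

theorem contDiffAt_trace_inv_add_sum_smul_add (A : Matrix n n 𝕜) (B : ι → Matrix n n 𝕜)
    (y : ι → 𝕜) {lam : ι → 𝕜} {k : WithTop ℕ∞} (h : IsUnit (A + ∑ r, lam r • B r)) :
    ContDiffAt 𝕜 k (fun l : ι → 𝕜 => (A + ∑ r, l r • B r)⁻¹.trace + ∑ r, l r * y r) lam := by
  have hM : ContDiff 𝕜 k fun l : ι → 𝕜 => A + ∑ r, l r • B r := by fun_prop
  have htr := (traceLinearMap n 𝕜 𝕜).toContinuousLinearMap.contDiff (n := k)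
  exact (htr.contDiffAt.comp lam (hM.contDiffAt.matrix_inv h)).add (by fun_prop)

theorem iteratedFDeriv_two_trace_inv_add_sum_smul_add (A : Matrix n n 𝕜)
    (B : ι → Matrix n n 𝕜) (y : ι → 𝕜) {lam : ι → 𝕜} (μ : ι → 𝕜)
    (h : IsUnit (A + ∑ r, lam r • B r)) :
    iteratedFDeriv 𝕜 2 (fun l : ι → 𝕜 => (A + ∑ r, l r • B r)⁻¹.trace + ∑ r, l r * y r) lam
        (fun _ => μ)
      = 2 * ((A + ∑ r, lam r • B r)⁻¹ * (∑ r, μ r • B r) * (A + ∑ r, lam r • B r)⁻¹ *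
          (∑ r, μ r • B r) * (A + ∑ r, lam r • B r)⁻¹).trace := by
  have hline :
      (fun s : 𝕜 => (A + ∑ r, (lam + s • μ) r • B r)⁻¹.trace + ∑ r, (lam + s • μ) r * y r) =
        fun s => ((A + ∑ r, lam r • B r) + s • ∑ r, μ r • B r)⁻¹.trace +
          (∑ r, lam r * y r + s * ∑ r, μ r * y r) := by
    funext s
    simp only [Pi.add_apply, Pi.smul_apply, smul_eq_mul, add_smul, add_mul,
      Finset.sum_add_distrib, Finset.smul_sum, Finset.mul_sum, smul_smul, mul_assoc, add_assoc]
  have hdiag := deriv2_comp_add_smul (x := lam) (v := μ) (t := (0 : 𝕜))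
    (by simpa using contDiffAt_trace_inv_add_sum_smul_add A B y h)
  rw [zero_smul, add_zero] at hdiag
  rw [← hdiag, hline, deriv2_trace_inv_add_smul_add _ _ _ _ h]

end MatrixCalculus

theorem iteratedFDeriv_two_trace_inv_add_sum_smul_add_pos {n ι : Type*} [Fintype n]
    [DecidableEq n] [Fintype ι] {A : Matrix n n ℝ} {B : ι → Matrix n n ℝ}
    (hB : ∀ r, (B r).IsSymm) (hli : LinearIndependent ℝ B) (y : ι → ℝ) {lam μ : ι → ℝ}
    (hlam : (A + ∑ r, lam r • B r).PosDef) (hμ : μ ≠ 0) :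
    0 < iteratedFDeriv ℝ 2 (fun l : ι → ℝ => (A + ∑ r, l r • B r)⁻¹.trace + ∑ r, l r * y r)
      lam (fun _ => μ) := by
  have hN : (∑ r, μ r • B r).IsHermitian :=
    isSelfAdjoint_sum _ fun r _ => isHermitian_iff_isSymm.mpr ((hB r).smul (μ r))
  have hN0 : ∑ r, μ r • B r ≠ 0 := fun h0 =>
    hμ (funext (Fintype.linearIndependent_iff.mp hli μ h0))
  rw [iteratedFDeriv_two_trace_inv_add_sum_smul_add _ _ _ _ hlam.isUnit]
  exact mul_pos two_pos (hlam.inv.trace_mul_mul_mul_mul_pos hN hN0)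

theorem hessian_posdef_and_strict_convexity
    (rs : ℕ) (B : Fin rs → Matrix (Fin rs) (Fin rs) ℝ)
    (hsymm : ∀ r, (B r).IsSymm)
    (hli : LinearIndependent ℝ B) (y : Fin rs → ℝ) :
    (∀ lam : Fin rs → ℝ,
        ((1 : Matrix (Fin rs) (Fin rs) ℝ) + ∑ r, lam r • B r).PosDef →
        ∀ μ : Fin rs → ℝ, μ ≠ 0 →
          0 < iteratedFDeriv ℝ 2
              (fun l : Fin rs → ℝ =>
                (((1 : Matrix (Fin rs) (Fin rs) ℝ) + ∑ r, l r • B r)⁻¹).trace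
                  + ∑ r, l r * y r)
              lam (fun _ => μ)) ∧
    StrictConvexOn ℝ
      {lam : Fin rs → ℝ | ((1 : Matrix (Fin rs) (Fin rs) ℝ) + ∑ r, lam r • B r).PosDef}
      (fun lam : Fin rs → ℝ =>
        (((1 : Matrix (Fin rs) (Fin rs) ℝ) + ∑ r, lam r • B r)⁻¹).trace
          + ∑ r, lam r * y r) := by
  refine ⟨fun lam hlam μ hμ =>
    iteratedFDeriv_two_trace_inv_add_sum_smul_add_pos hsymm hli y hlam hμ, ?_⟩
  exact strictConvexOn_of_iteratedFDeriv_two_pos (convex_setOf_posDef_add_sum_smul 1 B)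
    (fun lam hlam => contDiffAt_trace_inv_add_sum_smul_add 1 B y hlam.isUnit)
    fun lam hlam μ hμ => iteratedFDeriv_two_trace_inv_add_sum_smul_add_pos hsymm hli y hlam hμ
end

section
/- (Cubic degeneracy of the Hessian at infinity.) Let $\mathbf{d}\in\mathbb{R}^{r_*}$ with $\|\mathbf{d}\| = 1$ and $\sum_r d_r B_r \succ 0$. Then there exists $C_{\mathbf{d}} > 0$ such that the minimal eigenvalue $\alpha(t\mathbf{d})$ of the Hessian $\nabla^2 G(t\mathbf{d})$ satisfies $\alpha(t\mathbf{d}) \leq C_{\mathbf{d}}(1+t)^{-3}$ for all $t\geq 0$. -/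
/-!
Test the Hessian on the direction `d` itself. Along the ray `t ↦ t • d` one has
`M(t d) = 1 + t A` with `A = ∑ r, d r • B r ≻ 0`, so in the eigenvalues `a i > 0` of `A`,
`G(t d) = ∑ i, (a i * t + 1)⁻¹ + t ⟪d, y⟫`. Its second derivative in `t` is
`2 ∑ i, a i ^ 2 (a i * t + 1)⁻³`, and `a i * t + 1 ≥ min 1 (a i) * (1 + t)`.
-/

open Matrix BigOperators
open Filter Topology

theorem ContDiffAt.iteratedFDeriv_apply_diag_eq_iteratedDeriv_line {𝕜 E F : Type*}
    [NontriviallyNormedField 𝕜] [NormedAddCommGroup E] [NormedSpace 𝕜 E]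
    [NormedAddCommGroup F] [NormedSpace 𝕜 F] {f : E → F} {x : E} {n : ℕ}
    (hf : ContDiffAt 𝕜 n f x) (v : E) :
    iteratedFDeriv 𝕜 n f x (fun _ => v) = iteratedDeriv n (fun s : 𝕜 => f (x + s • v)) 0 := by
  obtain ⟨u, hu, hfu⟩ := hf.contDiffOn le_rfl (by simp)
  obtain ⟨U, hUu, hUo, hxU⟩ := mem_nhds_iff.mp hu
  set L := ContinuousLinearMap.toSpanSingleton 𝕜 v
  have hV : IsOpen ((x + ·) ⁻¹' U) := hUo.preimage (continuous_const_add x)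
  have hx0 : L 0 ∈ (x + ·) ⁻¹' U := by simpa using hxU
  have hg : ContDiffOn 𝕜 n (fun z => f (x + z)) ((x + ·) ⁻¹' U) :=
    (hfu.mono hUu).comp (contDiff_const.add contDiff_id).contDiffOn fun _ hz => hz
  have hL := L.iteratedFDerivWithin_comp_right hg hV.uniqueDiffOn
    (hV.preimage L.continuous).uniqueDiffOn hx0 le_rfl
  rw [iteratedFDerivWithin_of_isOpen n (hV.preimage L.continuous) hx0,
    iteratedFDerivWithin_of_isOpen n hV hx0, iteratedFDeriv_comp_add_left] at hL
  rw [iteratedDeriv_eq_iteratedFDeriv,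
    show (fun s : 𝕜 => f (x + s • v)) = (fun z => f (x + z)) ∘ L from rfl, hL]
  simp [L]

theorem iteratedDeriv_two_sum_inv_linear_add_linear {𝕜 ι : Type*} [NontriviallyNormedField 𝕜]
    [Fintype ι] (a : ι → 𝕜) (c : 𝕜) {t : 𝕜} (ht : ∀ i, a i * t + 1 ≠ 0) :
    iteratedDeriv 2 (fun u => ∑ i, (a i * u + 1)⁻¹ + u * c) t
      = ∑ i, 2 * a i ^ 2 * ((a i * t + 1) ^ 3)⁻¹ := by
  rw [iteratedDeriv_fun_add (ContDiffAt.sum fun i _ => by fun_prop (disch := exact ht i))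
    (by fun_prop), iteratedDeriv_fun_sum fun i _ => by fun_prop (disch := exact ht i)]
  simp [iteratedDeriv_eq_iterate, iter_deriv_inv_linear]

theorem ContinuousMultilinearMap.bddBelow_range_apply_diag_of_norm_eq_one {E : Type*}
    [NormedAddCommGroup E] [NormedSpace ℝ E] {n : ℕ}
    (T : ContinuousMultilinearMap ℝ (fun _ : Fin n => E) ℝ) :
    BddBelow (Set.range fun v : {v : E // ‖v‖ = 1} => T fun _ => v) := by
  refine ⟨-‖T‖, ?_⟩
  rintro _ ⟨v, rfl⟩
  have h := T.le_opNorm fun _ => v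
  simp only [v.2, Finset.prod_const_one, mul_one, Real.norm_eq_abs] at h
  exact neg_le_of_abs_le h

theorem inv_pow_mul_add_one_le {a t : ℝ} (ha : 0 < a) (ht : 0 ≤ t) (k : ℕ) :
    ((a * t + 1) ^ k)⁻¹ ≤ ((min 1 a) ^ k)⁻¹ * ((1 + t) ^ k)⁻¹ := by
  have hle : min 1 a * (1 + t) ≤ a * t + 1 := by
    nlinarith [min_le_left 1 a, min_le_right 1 a]
  have hm : 0 < min 1 a := lt_min one_pos ha
  rw [← mul_inv, ← mul_pow]
  exact inv_anti₀ (by positivity) (pow_le_pow_left₀ (by positivity) hle k)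

namespace Matrix

theorem IsHermitian.trace_cfc {𝕜 n : Type*} [RCLike 𝕜] [Fintype n] [DecidableEq n]
    {A : Matrix n n 𝕜} (hA : A.IsHermitian) (f : ℝ → ℝ) :
    (cfc f A).trace = ∑ i, (f (hA.eigenvalues i) : 𝕜) := by
  rw [hA.cfc_eq, IsHermitian.cfc, Unitary.conjStarAlgAut_apply, trace_mul_cycle,
    Unitary.coe_star_mul_self, one_mul, trace_diagonal]
  rfl

theorem IsHermitian.trace_inv_one_add_smul {n : Type*} [Fintype n] [DecidableEq n]
    {A : Matrix n n ℝ} (hA : A.IsHermitian) {u : ℝ} (hu : ∀ i, hA.eigenvalues i * u + 1 ≠ 0) :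
    ((1 : Matrix n n ℝ) + u • A)⁻¹.trace = ∑ i, (hA.eigenvalues i * u + 1)⁻¹ := by
  have hA' : IsSelfAdjoint A := hA
  have hlin : cfc (fun x => x * u + 1) A = 1 + u • A := by
    simp_rw [cfc_add_const 1 (fun x => x * u) A, mul_comm _ u, cfc_const_mul_id u A, map_one,
      add_comm]
  have hinv := hA.trace_cfc fun x => (x * u + 1)⁻¹
  rw [cfc_inv (fun x => x * u + 1) A, hlin, ← nonsing_inv_eq_ringInverse] at hinv
  · simpa using hinv
  rintro x hx
  obtain ⟨i, rfl⟩ := hA.spectrum_real_eq_range_eigenvalues ▸ hx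
  exact hu i

theorem contDiffAt_trace_inv_one_add_sum_smul {ι m : Type*} [Fintype ι] [Fintype m]
    [DecidableEq m] (B : ι → Matrix m m ℝ) {x : EuclideanSpace ℝ ι}
    (hx : IsUnit (1 + ∑ r, x r • B r)) {k : WithTop ℕ∞} :
    ContDiffAt ℝ k (fun z : EuclideanSpace ℝ ι => (1 + ∑ r, z r • B r)⁻¹.trace) x := by
  -- Any norm will do; the `ℓ∞` operator norm makes the matrices a complete normed algebra.
  let := Matrix.linftyOpNormedRing (n := m) (α := ℝ)
  let := Matrix.linftyOpNormedAlgebra (n := m) (R := ℝ) (α := ℝ)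
  obtain ⟨u, hu⟩ := hx
  have hinv : ContDiffAt ℝ k Ring.inverse (1 + ∑ r, x r • B r) := hu ▸ contDiffAt_ringInverse ℝ u
  have hM : ContDiff ℝ k fun z : EuclideanSpace ℝ ι => 1 + ∑ r, z r • B r := by fun_prop
  simp_rw [nonsing_inv_eq_ringInverse]
  have h := hinv.comp x hM.contDiffAt
  exact (LinearMap.toContinuousLinearMap (traceLinearMap m ℝ ℝ)).contDiff.contDiffAt.comp x h

theorem iteratedFDeriv_two_trace_inv_smul_apply_self {ι m : Type*} [Fintype ι] [Fintype m]
    [DecidableEq m] (B : ι → Matrix m m ℝ) (y : ι → ℝ) (d : EuclideanSpace ℝ ι)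
    (hA : (∑ r, d r • B r).PosDef) {t : ℝ} (ht : 0 ≤ t) :
    iteratedFDeriv ℝ 2
        (fun z : EuclideanSpace ℝ ι => (1 + ∑ r, z r • B r)⁻¹.trace + ∑ r, z r * y r)
        (t • d) (fun _ => d)
      = ∑ i, 2 * hA.1.eigenvalues i ^ 2 * ((hA.1.eigenvalues i * t + 1) ^ 3)⁻¹ := by
  set A := ∑ r, d r • B r
  set a := hA.1.eigenvalues
  have hline (u : ℝ) : ∑ r, (u • d) r • B r = u • A := by
    simp [A, Finset.smul_sum, smul_smul]
  have hpos (i) : 0 < a i * t + 1 := by nlinarith [hA.eigenvalues_pos i]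
  have hsmooth : ContDiffAt ℝ 2
      (fun z : EuclideanSpace ℝ ι => (1 + ∑ r, z r • B r)⁻¹.trace + ∑ r, z r * y r) (t • d) := by
    refine (contDiffAt_trace_inv_one_add_sum_smul B ?_).add (by fun_prop)
    rw [hline]
    exact (PosDef.one.add_posSemidef (hA.posSemidef.smul ht)).isUnit
  have heq : (fun u : ℝ => (1 + ∑ r, (u • d) r • B r)⁻¹.trace + ∑ r, (u • d) r * y r)
      =ᶠ[𝓝 t] fun u => ∑ i, (a i * u + 1)⁻¹ + u * ∑ r, d r * y r := by
    have : ∀ᶠ u in 𝓝 t, ∀ i, 0 < a i * u + 1 :=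
      eventually_all.2 fun i =>
        ((by fun_prop : Continuous fun u => a i * u + 1).tendsto t).eventually_const_lt (hpos i)
    filter_upwards [this] with u hu
    rw [hline, hA.1.trace_inv_one_add_smul fun i => (hu i).ne']
    simp [a, Finset.mul_sum, mul_assoc]
  rw [hsmooth.iteratedFDeriv_apply_diag_eq_iteratedDeriv_line]
  simp_rw [← add_smul]
  rw [congrFun (iteratedDeriv_comp_const_add 2
      (fun u : ℝ => (1 + ∑ r, (u • d) r • B r)⁻¹.trace + ∑ r, (u • d) r * y r) t) 0,
    add_zero, (heq.iteratedDeriv 2).eq_of_nhds,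
    iteratedDeriv_two_sum_inv_linear_add_linear a _ fun i => (hpos i).ne']

end Matrix

theorem hessian_min_eigenvalue_cubic_decay_general
    (rs : ℕ) (B : Fin rs → Matrix (Fin rs) (Fin rs) ℝ)
    (y : Fin rs → ℝ)
    (dvec : EuclideanSpace ℝ (Fin rs)) (hd : ‖dvec‖ = 1)
    (hpos : (∑ r, dvec r • B r).PosDef) :
    ∃ Cd : ℝ, 0 < Cd ∧ ∀ t : ℝ, 0 ≤ t →
      (⨅ μ : {v : EuclideanSpace ℝ (Fin rs) // ‖v‖ = 1},
          iteratedFDeriv ℝ 2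
            (fun lam : EuclideanSpace ℝ (Fin rs) =>
              (((1 : Matrix (Fin rs) (Fin rs) ℝ) + ∑ r, lam r • B r)⁻¹).trace
                + ∑ r, lam r * y r)
            (t • dvec) (fun _ => (μ : EuclideanSpace ℝ (Fin rs))))
        ≤ Cd * ((1 + t) ^ 3)⁻¹ := by
  set a := hpos.1.eigenvalues
  have hC : 0 ≤ ∑ i, 2 * a i ^ 2 * ((min 1 (a i)) ^ 3)⁻¹ :=
    Finset.sum_nonneg fun i _ => by have := hpos.eigenvalues_pos i; positivity
  refine ⟨∑ i, 2 * a i ^ 2 * ((min 1 (a i)) ^ 3)⁻¹ + 1, by linarith, fun t ht =>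
    (ciInf_le (ContinuousMultilinearMap.bddBelow_range_apply_diag_of_norm_eq_one _)
      ⟨dvec, hd⟩).trans ?_⟩
  calc _ = ∑ i, 2 * a i ^ 2 * ((a i * t + 1) ^ 3)⁻¹ :=
        iteratedFDeriv_two_trace_inv_smul_apply_self B y dvec hpos ht
    _ ≤ ∑ i, 2 * a i ^ 2 * (((min 1 (a i)) ^ 3)⁻¹ * ((1 + t) ^ 3)⁻¹) :=
        Finset.sum_le_sum fun i _ => by
          gcongr
          exact inv_pow_mul_add_one_le (hpos.eigenvalues_pos i) ht 3
    _ ≤ (∑ i, 2 * a i ^ 2 * ((min 1 (a i)) ^ 3)⁻¹ + 1) * ((1 + t) ^ 3)⁻¹ := by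
        simp_rw [← mul_assoc, ← Finset.sum_mul]
        gcongr
        linarith

theorem hessian_min_eigenvalue_cubic_decay
    (rs : ℕ) (B : Fin rs → Matrix (Fin rs) (Fin rs) ℝ)
    (hsymm : ∀ r, (B r).IsSymm) (y : Fin rs → ℝ)
    (dvec : EuclideanSpace ℝ (Fin rs)) (hd : ‖dvec‖ = 1)
    (hpos : (∑ r, dvec r • B r).PosDef) :
    ∃ Cd : ℝ, 0 < Cd ∧ ∀ t : ℝ, 0 ≤ t →
      (⨅ μ : {v : EuclideanSpace ℝ (Fin rs) // ‖v‖ = 1},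
          iteratedFDeriv ℝ 2
            (fun lam : EuclideanSpace ℝ (Fin rs) =>
              (((1 : Matrix (Fin rs) (Fin rs) ℝ) + ∑ r, lam r • B r)⁻¹).trace
                + ∑ r, lam r * y r)
            (t • dvec) (fun _ => (μ : EuclideanSpace ℝ (Fin rs))))
        ≤ Cd * ((1 + t) ^ 3)⁻¹ :=
  hessian_min_eigenvalue_cubic_decay_general rs B y dvec hd hpos
end

section
/- (Markov–Lukács, even case.) Let $p$ be a univariate real polynomial of degree at most $2k$. Then $p(x)\geq 0$ for all $x\in[0,1]$ if and only if there exist polynomials $a$ of degree at most $k$ and $b$ of degree at most $k-1$ such that $p(x) = a(x)^2 + x(1-x)b(x)^2$. -/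
/-!
The forms `a ^ 2 + X * (1 - X) * b ^ 2` with these degree bounds are closed under multiplication,
by the two-square identity
`(a₁² + w b₁²) (a₂² + w b₂²) = (a₁ a₂ - w b₁ b₂)² + w (a₁ b₂ + b₁ a₂)²`,
and every polynomial of degree at most two that is nonnegative on `[0, 1]` is such a form.
A polynomial of higher degree that is nonnegative on `[0, 1]` has a quadratic factor that is
nonnegative there: `(X - r)²` if it has a root `r` in `(0, 1)`, which must be a double root,
and otherwise any real quadratic factor, which has no root in `(0, 1)` and hence keeps one sign.
The cofactor is again nonnegative on `[0, 1]`, so induction on the degree applies.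
-/

open Polynomial Set

section Interval

variable {a b : ℝ}

lemma Polynomial.eval_nonneg_on_Icc_of_nonneg_on_Ioo_diff {q : ℝ[X]} (hab : a < b) {F : Set ℝ}
    (hF : F.Finite) (h : ∀ x ∈ Ioo a b \ F, 0 ≤ q.eval x) : ∀ x ∈ Icc a b, 0 ≤ q.eval x := by
  have hsub : Icc a b ⊆ closure (Ioo a b ∩ Fᶜ) := by
    rw [← closure_Ioo hab.ne]
    exact closure_minimal ((hF.countable.dense_compl ℝ).open_subset_closure_inter isOpen_Ioo)
      isClosed_closure
  exact fun x hx => closure_minimal h (isClosed_le continuous_const q.continuous) (hsub hx)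

lemma Polynomial.eval_nonneg_of_eval_mul_nonneg {f q : ℝ[X]} (hab : a < b) (hf0 : f ≠ 0)
    (hf : ∀ x ∈ Icc a b, 0 ≤ f.eval x) (hfq : ∀ x ∈ Icc a b, 0 ≤ (f * q).eval x) :
    ∀ x ∈ Icc a b, 0 ≤ q.eval x := by
  refine eval_nonneg_on_Icc_of_nonneg_on_Ioo_diff hab (finite_setOfPred_isRoot hf0) ?_
  rintro x ⟨hx, hfx⟩
  have := hfq x (Ioo_subset_Icc_self hx)
  rw [eval_mul] at this
  exact (mul_nonneg_iff_of_pos_left ((hf x (Ioo_subset_Icc_self hx)).lt_of_ne' hfx)).1 this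

lemma Polynomial.eval_nonneg_or_eval_neg_nonneg {f : ℝ[X]} (hab : a < b)
    (h : ∀ x ∈ Ioo a b, ¬ f.IsRoot x) :
    (∀ x ∈ Icc a b, 0 ≤ f.eval x) ∨ ∀ x ∈ Icc a b, 0 ≤ (-f).eval x := by
  have key : (∀ x ∈ Ioo a b, 0 ≤ f.eval x) ∨ ∀ x ∈ Ioo a b, 0 ≤ (-f).eval x := by
    by_contra! ⟨⟨x, hx, hfx⟩, ⟨y, hy, hfy⟩⟩
    rw [eval_neg, neg_lt_zero] at hfy
    obtain ⟨z, hz, hfz⟩ := isPreconnected_Ioo.intermediate_value hx hy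
      f.continuous.continuousOn ⟨hfx.le, hfy.le⟩
    exact h z hz hfz
  have hF : (∅ : Set ℝ).Finite := finite_empty
  exact key.imp (fun h' => eval_nonneg_on_Icc_of_nonneg_on_Ioo_diff hab hF fun x hx => h' x hx.1)
    (fun h' => eval_nonneg_on_Icc_of_nonneg_on_Ioo_diff hab hF fun x hx => h' x hx.1)

lemma Polynomial.sq_X_sub_C_dvd_of_isLocalMin {p : ℝ[X]} {r : ℝ} (hr : p.IsRoot r)
    (hmin : IsLocalMin (fun x => p.eval x) r) : (X - C r) ^ 2 ∣ p := by
  rcases eq_or_ne p 0 with rfl | hp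
  · exact dvd_zero _
  rw [← le_rootMultiplicity_iff hp]
  refine (one_lt_rootMultiplicity_iff_isRoot hp).2 ⟨hr, ?_⟩
  simpa [Polynomial.deriv] using hmin.deriv_eq_zero

lemma Polynomial.exists_dvd_natDegree_eq_two_nonneg {p : ℝ[X]} (hab : a < b)
    (hp : ∀ x ∈ Icc a b, 0 ≤ p.eval x) (hdeg : 2 ≤ p.natDegree) :
    ∃ f, f ∣ p ∧ f.natDegree = 2 ∧ ∀ x ∈ Icc a b, 0 ≤ f.eval x := by
  by_cases hroot : ∃ r ∈ Ioo a b, p.IsRoot r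
  · obtain ⟨r, hr, hpr⟩ := hroot
    have hmin : IsLocalMin (fun x => p.eval x) r := by
      filter_upwards [Icc_mem_nhds hr.1 hr.2] with x hx
      exact hpr.eq_zero ▸ hp x hx
    exact ⟨(X - C r) ^ 2, sq_X_sub_C_dvd_of_isLocalMin hpr hmin, by simp [natDegree_pow],
      fun x _ => by simpa using sq_nonneg (x - r)⟩
  push Not at hroot
  have hp0 : p ≠ 0 := by rintro rfl; simp at hdeg
  have hmonic : IsMonicOfDegree (p * C p.leadingCoeff⁻¹) (p.natDegree - 2 + 2) :=
    ⟨by rw [natDegree_mul_leadingCoeff_inv _ hp0]; omega, monic_mul_leadingCoeff_inv hp0⟩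
  obtain ⟨g, q, hg, -, hgq⟩ := hmonic.eq_isMonicOfDegree_two_mul_isMonicOfDegree
  have hgp : g ∣ p := by
    refine Dvd.intro (q * C p.leadingCoeff) ?_
    rw [← mul_assoc, ← hgq, mul_assoc, ← C_mul, inv_mul_cancel₀ (leadingCoeff_ne_zero.2 hp0),
      C_1, mul_one]
  rcases eval_nonneg_or_eval_neg_nonneg hab (fun x hx hgx => hroot x hx (hgx.dvd hgp)) with h | h
  · exact ⟨g, hgp, hg.natDegree_eq, h⟩
  · exact ⟨-g, neg_dvd.2 hgp, by rw [natDegree_neg, hg.natDegree_eq], h⟩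

end Interval

def MarkovLukacsRep (k : ℕ) (p : ℝ[X]) : Prop :=
  ∃ a b : ℝ[X], a.degree ≤ (k : ℕ) ∧ b.degree < (k : ℕ) ∧ p = a ^ 2 + X * (1 - X) * b ^ 2

namespace MarkovLukacsRep

variable {m n : ℕ} {p q : ℝ[X]}

lemma mono (h : m ≤ n) (hp : MarkovLukacsRep m p) : MarkovLukacsRep n p := by
  obtain ⟨a, b, ha, hb, rfl⟩ := hp
  have h' : ((m : ℕ) : WithBot ℕ) ≤ (n : ℕ) := by exact_mod_cast h
  exact ⟨a, b, ha.trans h', hb.trans_le h', rfl⟩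

lemma eval_nonneg (hp : MarkovLukacsRep m p) : ∀ x ∈ Icc (0 : ℝ) 1, 0 ≤ p.eval x := by
  obtain ⟨a, b, -, -, rfl⟩ := hp
  intro x hx
  have hw : 0 ≤ x * (1 - x) := mul_nonneg hx.1 (sub_nonneg.2 hx.2)
  simp only [eval_add, eval_mul, eval_pow, eval_sub, eval_X, eval_one]
  positivity

lemma mul (hp : MarkovLukacsRep m p) (hq : MarkovLukacsRep n q) :
    MarkovLukacsRep (m + n) (p * q) := by
  obtain ⟨a₁, b₁, ha₁, hb₁, rfl⟩ := hp
  obtain ⟨a₂, b₂, ha₂, hb₂, rfl⟩ := hq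
  have hw : (X * (1 - X) : ℝ[X]).degree ≤ 1 + 1 := by compute_degree!
  have hb₁' := Nat.WithBot.add_one_le_of_lt hb₁
  have hb₂' := Nat.WithBot.add_one_le_of_lt hb₂
  refine ⟨a₁ * a₂ - X * (1 - X) * (b₁ * b₂), a₁ * b₂ + b₁ * a₂, ?_, ?_, by ring⟩
  · refine (degree_sub_le _ _).trans (max_le ?_ ?_)
    · push_cast; exact degree_mul_le_of_le ha₁ ha₂
    · calc _ ≤ (1 + 1) + (b₁.degree + b₂.degree) := degree_mul_le_of_le hw (degree_mul_le _ _)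
        _ = (b₁.degree + 1) + (b₂.degree + 1) := by abel
        _ ≤ _ := by push_cast; exact add_le_add hb₁' hb₂'
  · have hm : ((m : ℕ) : WithBot ℕ) ≠ ⊥ := WithBot.natCast_ne_bot m
    have hn : ((n : ℕ) : WithBot ℕ) ≠ ⊥ := WithBot.natCast_ne_bot n
    push_cast
    refine (degree_add_le _ _).trans_lt (max_lt ?_ ?_)
    · exact (degree_mul_le _ _).trans_lt
        ((add_le_add_left ha₁ _).trans_lt (WithBot.add_lt_add_left hm hb₂))
    · exact (degree_mul_le _ _).trans_lt
        ((add_le_add_right ha₂ _).trans_lt (WithBot.add_lt_add_right hn hb₁))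

end MarkovLukacsRep

lemma sq_le_four_mul_mul_of_nonneg_on_Icc {u v w : ℝ}
    (h : ∀ x ∈ Icc (0 : ℝ) 1, 0 ≤ u * x ^ 2 + v * x + w) (hvw : v + 2 * w < 0) :
    v ^ 2 ≤ 4 * u * w := by
  have h₀ : 0 ≤ w := by simpa using h 0 (by simp)
  have h₁ : 0 ≤ u + v + w := by simpa using h 1 (by simp)
  have hu : 0 < u := by linarith
  have ht : 2 * u * (-v / (2 * u)) = -v := by field_simp
  have hvert := h (-v / (2 * u)) ⟨div_nonneg (by linarith) (by positivity),
    (div_le_one (by positivity)).2 (by linarith)⟩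
  nlinarith [mul_nonneg hu.le hvert]

lemma markovLukacsRep_one_of_natDegree_le_two {p : ℝ[X]} (hdeg : p.natDegree ≤ 2)
    (hp : ∀ x ∈ Icc (0 : ℝ) 1, 0 ≤ p.eval x) : MarkovLukacsRep 1 p := by
  set u := p.coeff 2
  set v := p.coeff 1
  set w := p.coeff 0
  have hp_eq : p = C u * X ^ 2 + C v * X + C w :=
    eq_quadratic_of_degree_le_two (natDegree_le_iff_degree_le.1 hdeg)
  have hquad : ∀ x ∈ Icc (0 : ℝ) 1, 0 ≤ u * x ^ 2 + v * x + w := fun x hx => by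
    simpa [hp_eq] using hp x hx
  have h₀ : 0 ≤ w := by simpa using hquad 0 (by simp)
  have h₁ : 0 ≤ u + v + w := by simpa using hquad 1 (by simp)
  -- Any `a = α X + β`, `b = γ` with `β² = p(0)`, `(α + β)² = p(1)` works once `γ² = α² - u ≥ 0`;
  -- taking `β = -√p(0)`, `α = √p(0) + √p(1)` makes `α² - u` as large as possible.
  set s₀ := √w
  set s₁ := √(u + v + w)
  have hs₀ : s₀ ^ 2 = w := Real.sq_sqrt h₀
  have hs₁ : s₁ ^ 2 = u + v + w := Real.sq_sqrt h₁
  have hs₀₁ : 0 ≤ s₀ * s₁ := by positivity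
  have hγ : 0 ≤ (s₀ + s₁) ^ 2 - u := by
    rcases le_or_gt 0 (v + 2 * w) with hvw | hvw
    · nlinarith
    · nlinarith [sq_le_four_mul_mul_of_nonneg_on_Icc hquad hvw]
  set γ := √((s₀ + s₁) ^ 2 - u)
  have hγ' : γ ^ 2 = (s₀ + s₁) ^ 2 - u := Real.sq_sqrt hγ
  refine ⟨C (s₀ + s₁) * X - C s₀, C γ, ?_, ?_, ?_⟩
  · exact (degree_sub_le _ _).trans (max_le (degree_C_mul_X_le _) (degree_C_le.trans (by simp)))
  · exact degree_C_le.trans_lt (by simp)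
  · have hu : u = (s₀ + s₁) ^ 2 - γ ^ 2 := by linarith
    have hv : v = γ ^ 2 - 2 * (s₀ + s₁) * s₀ := by linarith
    rw [hp_eq, hu, hv, ← hs₀]
    simp only [map_sub, map_mul, map_pow, map_ofNat]
    ring

lemma markovLukacsRep_of_nonneg (k : ℕ) {p : ℝ[X]} (hdeg : p.natDegree ≤ 2 * k)
    (hp : ∀ x ∈ Icc (0 : ℝ) 1, 0 ≤ p.eval x) : MarkovLukacsRep k p := by
  induction k generalizing p with
  | zero =>
    rw [eq_C_of_natDegree_le_zero hdeg] at hp ⊢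
    have hc : 0 ≤ p.coeff 0 := by simpa using hp 0 (by simp)
    refine ⟨C √(p.coeff 0), 0, degree_C_le, by simp, ?_⟩
    rw [← C_pow, Real.sq_sqrt hc]
    simp
  | succ k ih =>
    rcases le_or_gt p.natDegree 2 with hle | hgt
    · exact (markovLukacsRep_one_of_natDegree_le_two hle hp).mono (by omega)
    obtain ⟨f, ⟨q, rfl⟩, hf, hf_nonneg⟩ := exists_dvd_natDegree_eq_two_nonneg zero_lt_one hp hgt.le
    have hf0 : f ≠ 0 := by rintro rfl; simp at hf
    have hq0 : q ≠ 0 := by rintro rfl; simp at hgt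
    rw [natDegree_mul hf0 hq0, hf] at hdeg
    have hq := ih (by omega) (eval_nonneg_of_eval_mul_nonneg zero_lt_one hf0 hf_nonneg hp)
    rw [add_comm]
    exact (markovLukacsRep_one_of_natDegree_le_two hf.le hf_nonneg).mul hq

theorem markov_lukacs_even (k : ℕ) (p : Polynomial ℝ)
    (hdeg : p.degree ≤ (2 * k : ℕ)) :
    (∀ x ∈ Set.Icc (0 : ℝ) 1, 0 ≤ p.eval x) ↔
      ∃ a b : Polynomial ℝ,
        a.degree ≤ (k : ℕ) ∧ b.degree < (k : ℕ) ∧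
        p = a ^ 2 + X * (1 - X) * b ^ 2 :=
  ⟨markovLukacsRep_of_nonneg k (natDegree_le_iff_degree_le.2 hdeg),
    MarkovLukacsRep.eval_nonneg⟩
end

section
/- (Markov–Lukács, odd case.) Let $p$ be a univariate real polynomial of degree at most $2k+1$. Then $p(x)\geq 0$ for all $x\in[0,1]$ if and only if there exist polynomials $a$ and $b$, each of degree at most $k$, such that $p(x) = x\,a(x)^2 + (1-x)b(x)^2$. -/
/-!
Over `ℝ`, a polynomial that is nonnegative on `[0, 1]` is a product of nonnegative constants,
linear factors `X - r` with `r ≤ 0` and `r - X` with `r ≥ 1`, squares `(X - r)²` (a root inside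
`(0, 1)` is a local minimum, hence a double root), and quadratics without real roots. Each of
these factors of degree `n` has a Lukács representation of degree `n`: `a² + X(1 - X)b²` with
`deg a ≤ k`, `deg b < k` if `n = 2k`, and `Xa² + (1 - X)b²` with `deg a, deg b ≤ k` if
`n = 2k + 1`. Brahmagupta-type identities make these representations multiplicative, with degrees
adding up, and a representation of degree `2k` can be rewritten as one of degree `2k + 1`.
-/

open Polynomial Set

namespace Polynomial

variable {R : Type*} [CommRing R]

def IsLukacsEven (k : ℕ) (p : R[X]) : Prop :=
  ∃ a b : R[X], a.degree ≤ k ∧ b.degree < k ∧ p = a ^ 2 + X * (1 - X) * b ^ 2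

def IsLukacsOdd (k : ℕ) (p : R[X]) : Prop :=
  ∃ a b : R[X], a.degree ≤ k ∧ b.degree ≤ k ∧ p = X * a ^ 2 + (1 - X) * b ^ 2

def IsLukacs (n : ℕ) (p : R[X]) : Prop :=
  (∃ k, n = 2 * k ∧ IsLukacsEven k p) ∨ ∃ k, n = 2 * k + 1 ∧ IsLukacsOdd k p

lemma degree_mul_le_natCast_add {p q : R[X]} {m n : ℕ} (hp : p.degree ≤ m)
    (hq : q.degree ≤ n) : (p * q).degree ≤ (m + n : ℕ) :=
  (degree_mul_le_of_le hp hq).trans_eq (Nat.cast_add m n).symm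

lemma degree_mul_le_of_degree_lt {u b : R[X]} {k : ℕ} (hu : u.degree ≤ 1) (hb : b.degree < k) :
    (u * b).degree ≤ k :=
  (degree_mul_le_of_le hu le_rfl).trans (add_comm 1 b.degree ▸ Nat.WithBot.add_one_le_of_lt hb)

lemma degree_lt_of_degree_X_mul_le [Nontrivial R] {f : R[X]} {n : ℕ}
    (h : (X * f).degree ≤ (n : WithBot ℕ)) : f.degree < n := by
  rw [mul_comm, degree_mul_X] at h
  by_contra! hf
  have : ((n + 1 : ℕ) : WithBot ℕ) ≤ n := by push_cast; exact (add_le_add_left hf 1).trans h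
  norm_cast at this
  omega

lemma degree_one_sub_X_le : (1 - X : R[X]).degree ≤ 1 :=
  (degree_sub_le _ _).trans (max_le (degree_one_le.trans zero_le_one) degree_X_le)

lemma IsLukacsEven.mul [Nontrivial R] {k l : ℕ} {p q : R[X]} (hp : IsLukacsEven k p)
    (hq : IsLukacsEven l q) : IsLukacsEven (k + l) (p * q) := by
  obtain ⟨a, b, ha, hb, rfl⟩ := hp
  obtain ⟨c, d, hc, hd, rfl⟩ := hq
  refine ⟨a * c - X * b * ((1 - X) * d), a * d + b * c, ?_, ?_, by ring⟩
  · exact (degree_sub_le _ _).trans (max_le (degree_mul_le_natCast_add ha hc)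
      (degree_mul_le_natCast_add (degree_mul_le_of_degree_lt degree_X_le hb)
        (degree_mul_le_of_degree_lt degree_one_sub_X_le hd)))
  · refine degree_lt_of_degree_X_mul_le ?_
    rw [show X * (a * d + b * c) = a * (X * d) + X * b * c by ring]
    exact degree_add_le_of_degree_le
      (degree_mul_le_natCast_add ha (degree_mul_le_of_degree_lt degree_X_le hd))
      (degree_mul_le_natCast_add (degree_mul_le_of_degree_lt degree_X_le hb) hc)

lemma IsLukacsEven.mul_isLukacsOdd {k l : ℕ} {p q : R[X]} (hp : IsLukacsEven k p)
    (hq : IsLukacsOdd l q) : IsLukacsOdd (k + l) (p * q) := by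
  obtain ⟨a, b, ha, hb, rfl⟩ := hp
  obtain ⟨c, d, hc, hd, rfl⟩ := hq
  refine ⟨a * c + (1 - X) * b * d, a * d - X * b * c, ?_, ?_, by ring⟩
  · exact degree_add_le_of_degree_le (degree_mul_le_natCast_add ha hc)
      (degree_mul_le_natCast_add (degree_mul_le_of_degree_lt degree_one_sub_X_le hb) hd)
  · exact (degree_sub_le _ _).trans (max_le (degree_mul_le_natCast_add ha hd)
      (degree_mul_le_natCast_add (degree_mul_le_of_degree_lt degree_X_le hb) hc))

lemma IsLukacsOdd.mul {k l : ℕ} {p q : R[X]} (hp : IsLukacsOdd k p)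
    (hq : IsLukacsOdd l q) : IsLukacsEven (k + l + 1) (p * q) := by
  obtain ⟨a, b, ha, hb, rfl⟩ := hp
  obtain ⟨c, d, hc, hd, rfl⟩ := hq
  refine ⟨a * X * c + b * (1 - X) * d, a * d - b * c, ?_, ?_, by ring⟩
  · rw [add_right_comm]
    exact degree_add_le_of_degree_le
      (degree_mul_le_natCast_add (degree_mul_le_natCast_add ha degree_X_le) hc)
      (degree_mul_le_natCast_add (degree_mul_le_natCast_add hb degree_one_sub_X_le) hd)
  · have hlt : ((k + l : ℕ) : WithBot ℕ) < (k + l + 1 : ℕ) :=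
      WithBot.coe_lt_coe.2 (k + l).lt_succ_self
    exact (degree_sub_le _ _).trans_lt (max_lt ((degree_mul_le_natCast_add ha hd).trans_lt hlt)
      ((degree_mul_le_natCast_add hb hc).trans_lt hlt))

lemma IsLukacsEven.isLukacsOdd {k : ℕ} {p : R[X]} (hp : IsLukacsEven k p) : IsLukacsOdd k p := by
  obtain ⟨a, b, ha, hb, rfl⟩ := hp
  refine ⟨a + (1 - X) * b, a - X * b, ?_, ?_, by ring⟩
  · exact degree_add_le_of_degree_le ha (degree_mul_le_of_degree_lt degree_one_sub_X_le hb)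
  · exact (degree_sub_le _ _).trans (max_le ha (degree_mul_le_of_degree_lt degree_X_le hb))

lemma IsLukacsOdd.mono {k l : ℕ} {p : R[X]} (hp : IsLukacsOdd k p) (hkl : k ≤ l) :
    IsLukacsOdd l p := by
  obtain ⟨a, b, ha, hb, rfl⟩ := hp
  have hkl : (k : WithBot ℕ) ≤ l := by exact_mod_cast hkl
  exact ⟨a, b, ha.trans hkl, hb.trans hkl, rfl⟩

lemma IsLukacs.mul [Nontrivial R] {m n : ℕ} {p q : R[X]} (hp : IsLukacs m p)
    (hq : IsLukacs n q) : IsLukacs (m + n) (p * q) := by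
  rcases hp with ⟨k, rfl, hp⟩ | ⟨k, rfl, hp⟩ <;> rcases hq with ⟨l, rfl, hq⟩ | ⟨l, rfl, hq⟩
  · exact .inl ⟨k + l, by ring, hp.mul hq⟩
  · exact .inr ⟨k + l, by ring, hp.mul_isLukacsOdd hq⟩
  · exact .inr ⟨l + k, by ring, mul_comm p q ▸ hq.mul_isLukacsOdd hp⟩
  · exact .inl ⟨k + l + 1, by ring, hp.mul hq⟩

lemma IsLukacs.isLukacsOdd {n k : ℕ} {p : R[X]} (hp : IsLukacs n p) (hn : n ≤ 2 * k + 1) :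
    IsLukacsOdd k p := by
  rcases hp with ⟨j, rfl, hp⟩ | ⟨j, rfl, hp⟩
  · exact hp.isLukacsOdd.mono (by omega)
  · exact hp.mono (by omega)

lemma IsLukacs.eval_nonneg {S : Type*} [CommRing S] [LinearOrder S] [IsStrictOrderedRing S]
    {n : ℕ} {p : S[X]} (hp : IsLukacs n p) {x : S} (hx : x ∈ Icc 0 1) : 0 ≤ p.eval x := by
  have hx0 : 0 ≤ x := hx.1
  have hx1 : 0 ≤ 1 - x := sub_nonneg.2 hx.2
  rcases hp with ⟨k, -, a, b, -, -, rfl⟩ | ⟨k, -, a, b, -, -, rfl⟩ <;>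
    simp only [eval_add, eval_mul, eval_pow, eval_sub, eval_one, eval_X] <;> positivity

lemma isLukacs_zero_C {c : ℝ} (hc : 0 ≤ c) : IsLukacs 0 (C c) :=
  .inl ⟨0, rfl, C √c, 0, degree_C_le, by simp, by simp [← C_pow, Real.sq_sqrt hc]⟩

lemma isLukacs_one_X_sub_C {r : ℝ} (hr : r ≤ 0) : IsLukacs 1 (X - C r) := by
  refine .inr ⟨0, rfl, C √(1 - r), C √(-r), degree_C_le, degree_C_le, ?_⟩
  rw [← C_pow, ← C_pow, Real.sq_sqrt (by linarith), Real.sq_sqrt (by linarith), C_sub, C_neg,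
    C_1]
  ring

lemma isLukacs_one_C_sub_X {r : ℝ} (hr : 1 ≤ r) : IsLukacs 1 (C r - X) := by
  refine .inr ⟨0, rfl, C √(r - 1), C √r, degree_C_le, degree_C_le, ?_⟩
  rw [← C_pow, ← C_pow, Real.sq_sqrt (by linarith), Real.sq_sqrt (by linarith), C_sub, C_1]
  ring

lemma isLukacs_two_X_sub_C_sq (r : ℝ) : IsLukacs 2 ((X - C r) ^ 2) :=
  .inl ⟨1, rfl, X - C r, 0, degree_X_sub_C_le r, by simp, by ring⟩

lemma isLukacs_two_X_sq_sub_C_mul_X_add_C (u v : ℝ) :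
    IsLukacs 2 (X ^ 2 - C (2 * u) * X + C (u ^ 2 + v ^ 2)) := by
  set B := 2 * (u ^ 2 + v ^ 2 - u)
  set γ := B + √(B ^ 2 + 4 * v ^ 2)
  have hsqrt : √(B ^ 2 + 4 * v ^ 2) ^ 2 = B ^ 2 + 4 * v ^ 2 := Real.sq_sqrt (by positivity)
  have hγ : 0 ≤ γ := by
    have : |B| ≤ √(B ^ 2 + 4 * v ^ 2) := Real.abs_le_sqrt (by nlinarith)
    linarith [neg_abs_le B]
  -- `γ` is the nonnegative root of `γ² - 2Bγ - 4v²`, the discriminant of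
  -- `X² - 2uX + u² + v² - γX(1 - X)`, which is therefore the perfect square `(1 + γ)(X - t)²`.
  have hγ₂ : γ ^ 2 = 2 * B * γ + 4 * v ^ 2 := by linear_combination hsqrt
  set t := (2 * u + γ) / (2 * (1 + γ)) with ht
  have hlin : (1 + γ) * (2 * t) = 2 * u + γ := by rw [ht]; field_simp
  have hconst : (1 + γ) * t ^ 2 = u ^ 2 + v ^ 2 := by
    rw [ht]
    field_simp
    linear_combination hγ₂
  refine .inl ⟨1, rfl, C √(1 + γ) * (X - C t), C √γ, ?_, ?_, ?_⟩
  · exact degree_mul_le_natCast_add degree_C_le (degree_X_sub_C_le t)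
  · exact degree_C_le.trans_lt (by decide)
  · have hlin' := congrArg C hlin
    have hconst' := congrArg C hconst
    rw [mul_pow, ← C_pow, ← C_pow, Real.sq_sqrt (by linarith), Real.sq_sqrt hγ]
    simp only [map_mul, map_add, map_pow, map_one, map_ofNat] at hlin' hconst' ⊢
    linear_combination X * hlin' - hconst'

lemma X_sub_C_sq_dvd_of_isLocalMin {p : ℝ[X]} {r : ℝ} (hr : p.IsRoot r)
    (hmin : IsLocalMin (fun x ↦ p.eval x) r) : (X - C r) ^ 2 ∣ p := by
  rcases eq_or_ne p 0 with rfl | hp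
  · exact dvd_zero _
  have hderiv : p.derivative.IsRoot r := by simpa using hmin.deriv_eq_zero
  exact (pow_dvd_pow _ ((one_lt_rootMultiplicity_iff_isRoot hp).2 ⟨hr, hderiv⟩)).trans
    (pow_rootMultiplicity_dvd p r)

lemma eval_nonneg_of_eval_mul_nonneg_s15 {f q : ℝ[X]} {a b : ℝ} (hab : a < b) (hf₀ : f ≠ 0)
    (hf : ∀ x ∈ Icc a b, 0 ≤ f.eval x) (hfq : ∀ x ∈ Icc a b, 0 ≤ (f * q).eval x) :
    ∀ x ∈ Icc a b, 0 ≤ q.eval x := by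
  set T := {x | f.IsRoot x}
  have hq : Ioo a b ∩ Tᶜ ⊆ {x | 0 ≤ q.eval x} := by
    rintro x ⟨hx, hfx⟩
    refine nonneg_of_mul_nonneg_right ?_ ((hf x (Ioo_subset_Icc_self hx)).lt_of_ne' hfx)
    simpa using hfq x (Ioo_subset_Icc_self hx)
  have hdense : Ioo a b ⊆ closure (Ioo a b ∩ Tᶜ) :=
    ((finite_setOfPred_isRoot hf₀).countable.dense_compl ℝ).open_subset_closure_inter isOpen_Ioo
  have hclosed : IsClosed {x | 0 ≤ q.eval x} := isClosed_le continuous_const q.continuous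
  rw [← closure_Ioo hab.ne]
  exact closure_minimal (hdense.trans (closure_minimal hq hclosed)) hclosed

lemma exists_isLukacs_dvd_of_isRoot {p : ℝ[X]} {r : ℝ} (hr : p.IsRoot r)
    (hp : ∀ x ∈ Icc (0 : ℝ) 1, 0 ≤ p.eval x) :
    ∃ f, f ∣ p ∧ 0 < f.natDegree ∧ IsLukacs f.natDegree f := by
  rcases le_or_gt r 0 with hr₀ | hr₀
  · exact ⟨X - C r, dvd_iff_isRoot.2 hr, by simp, by simpa using isLukacs_one_X_sub_C hr₀⟩
  rcases le_or_gt 1 r with hr₁ | hr₁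
  · have hdeg : (C r - X).natDegree = 1 := by
      rw [natDegree_sub_eq_right_of_natDegree_lt] <;> simp
    refine ⟨C r - X, ?_, by simp [hdeg], hdeg ▸ isLukacs_one_C_sub_X hr₁⟩
    rw [← neg_sub, neg_dvd]
    exact dvd_iff_isRoot.2 hr
  have hmin : IsLocalMin (fun x ↦ p.eval x) r := by
    filter_upwards [Icc_mem_nhds hr₀ hr₁] with x hx
    simpa [hr.eq_zero] using hp x hx
  exact ⟨(X - C r) ^ 2, X_sub_C_sq_dvd_of_isLocalMin hr hmin, by simp,
    by simpa using isLukacs_two_X_sub_C_sq r⟩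

lemma exists_isLukacs_dvd {p : ℝ[X]} (hp₀ : 0 < p.natDegree)
    (hp : ∀ x ∈ Icc (0 : ℝ) 1, 0 ≤ p.eval x) :
    ∃ f, f ∣ p ∧ 0 < f.natDegree ∧ IsLukacs f.natDegree f := by
  obtain ⟨z, hz⟩ :=
    IsAlgClosed.exists_aeval_eq_zero ℂ p (natDegree_pos_iff_degree_pos.1 hp₀).ne'
  by_cases him : z.im = 0
  · have hz' : z = algebraMap ℝ ℂ z.re := Complex.ext rfl (by simpa using him)
    rw [hz', aeval_algebraMap_apply_eq_algebraMap_eval] at hz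
    exact exists_isLukacs_dvd_of_isRoot (by simpa using hz) hp
  have hdvd := p.quadratic_dvd_of_aeval_eq_zero_im_ne_zero hz him
  rw [Complex.sq_norm, Complex.normSq_apply, ← sq, ← sq] at hdvd
  have hdeg := (isMonicOfDegree_sub_add_two (2 * z.re) (z.re ^ 2 + z.im ^ 2)).natDegree_eq
  exact ⟨_, hdvd, by omega, by rw [hdeg]; exact isLukacs_two_X_sq_sub_C_mul_X_add_C z.re z.im⟩

theorem isLukacs_natDegree_of_nonneg {p : ℝ[X]} (hp : ∀ x ∈ Icc (0 : ℝ) 1, 0 ≤ p.eval x) :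
    IsLukacs p.natDegree p := by
  induction hn : p.natDegree using Nat.strong_induction_on generalizing p with
  | _ n ih =>
  rcases Nat.eq_zero_or_pos n with rfl | hn₀
  · rw [eq_C_of_natDegree_eq_zero hn]
    exact isLukacs_zero_C (by simpa [coeff_zero_eq_eval_zero] using hp 0 ⟨le_rfl, zero_le_one⟩)
  obtain ⟨f, ⟨q, rfl⟩, hf₀, hf⟩ := exists_isLukacs_dvd (hn ▸ hn₀) hp
  have hfq : f * q ≠ 0 := ne_zero_of_natDegree_gt (hn ▸ hn₀)
  have hdeg : (f * q).natDegree = f.natDegree + q.natDegree :=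
    natDegree_mul (left_ne_zero_of_mul hfq) (right_ne_zero_of_mul hfq)
  have hq := ih q.natDegree (by omega) (eval_nonneg_of_eval_mul_nonneg_s15 zero_lt_one
    (left_ne_zero_of_mul hfq) (fun x hx ↦ hf.eval_nonneg hx) hp) rfl
  rw [← hn, hdeg]
  exact hf.mul hq

end Polynomial

theorem markov_lukacs_odd (k : ℕ) (p : Polynomial ℝ)
    (hdeg : p.degree ≤ (2 * k + 1 : ℕ)) :
    (∀ x ∈ Set.Icc (0 : ℝ) 1, 0 ≤ p.eval x) ↔
      ∃ a b : Polynomial ℝ,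
        a.degree ≤ (k : ℕ) ∧ b.degree ≤ (k : ℕ) ∧
        p = X * a ^ 2 + (1 - X) * b ^ 2 :=
  ⟨fun hp ↦ (isLukacs_natDegree_of_nonneg hp).isLukacsOdd (natDegree_le_iff_degree_le.2 hdeg),
    fun hp _ hx ↦ IsLukacs.eval_nonneg (.inr ⟨k, rfl, hp⟩) hx⟩
end

section
/- (Linear independence of the 1D localizing matrices.) Let $x_1,\dots,x_{n+1}$ be distinct points in $[0,1]$ and let $B_r$ be the block-diagonal matrices built from the rank-one blocks $g_1(x_r)w_1^r\otimes w_1^r$ and $g_2(x_r)w_2^r\otimes w_2^r$ with the Lukács weights ($g_1 = x$, $g_2 = 1-x$ for $n$ odd; $g_1 = 1$, $g_2 = x(1-x)$ for $n$ even) and $w_j^r$ the monomial vectors $(1, x_r, \dots)$ of appropriate lengths. Then the matrices $B_1,\dots,B_{n+1}$ are linearly independent. -/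
open Matrix BigOperators

/-- The 1D block-diagonal localizing matrix at a point `t`, with the Lukács weights:
for `n` odd (`n = 2k+1`), the two blocks are `t · (t^i t^j)_{0≤i,j≤k}` and
`(1-t) · (t^i t^j)_{0≤i,j≤k}`; for `n` even (`n = 2k`), they are
`(t^i t^j)_{0≤i,j≤k}` and `t(1-t) · (t^i t^j)_{0≤i,j≤k-1}`.
The first block occupies the indices `< n/2 + 1`. -/
def B1D (n : ℕ) (t : ℝ) : Matrix (Fin (n + 1)) (Fin (n + 1)) ℝ :=
  fun i j =>
    if (i : ℕ) < n / 2 + 1 ∧ (j : ℕ) < n / 2 + 1 then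
      (if n % 2 = 1 then t else 1) * t ^ (i : ℕ) * t ^ (j : ℕ)
    else if n / 2 + 1 ≤ (i : ℕ) ∧ n / 2 + 1 ≤ (j : ℕ) then
      (if n % 2 = 1 then 1 - t else t * (1 - t)) *
        t ^ ((i : ℕ) - (n / 2 + 1)) * t ^ ((j : ℕ) - (n / 2 + 1))
    else 0

lemma B1D_key (n : ℕ) (x : Fin (n + 1) → ℝ) (lam : Fin (n + 1) → ℝ)
    (hE : ∀ i j : Fin (n + 1), ∑ r, lam r * B1D n (x r) i j = 0) :
    ∀ p ≤ n, ∑ r, lam r * x r ^ p = 0 := by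
  rcases Nat.even_or_odd n with he | ho
  · -- even case: use top block entries
    have hmod : n % 2 = 0 := Nat.even_iff.mp he
    intro p hp
    set i : ℕ := min p (n / 2) with hi
    set j : ℕ := p - i with hj
    have hij : i + j = p := by omega
    have hi' : i < n / 2 + 1 := by omega
    have hj' : j < n / 2 + 1 := by omega
    have hin : i < n + 1 := by omega
    have hjn : j < n + 1 := by omega
    have h := hE ⟨i, hin⟩ ⟨j, hjn⟩
    have : ∀ r, lam r * B1D n (x r) ⟨i, hin⟩ ⟨j, hjn⟩ = lam r * x r ^ p := by
      intro r
      have hB : B1D n (x r) ⟨i, hin⟩ ⟨j, hjn⟩ = x r ^ p := by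
        simp only [B1D, hmod]
        rw [if_pos ⟨hi', hj'⟩]
        simp only [Nat.zero_ne_one, if_false, one_mul, ← pow_add, hij]
      rw [hB]
    rwa [Finset.sum_congr rfl fun r _ => this r] at h
  · -- odd case
    have hmod : n % 2 = 1 := Nat.odd_iff.mp ho
    have htop : ∀ q, 1 ≤ q → q ≤ n → ∑ r, lam r * x r ^ q = 0 := by
      intro q hq1 hqn
      set i : ℕ := min (q - 1) (n / 2) with hi
      set j : ℕ := q - 1 - i with hj
      have hij : i + j + 1 = q := by omega
      have hi' : i < n / 2 + 1 := by omega
      have hj' : j < n / 2 + 1 := by omega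
      have hin : i < n + 1 := by omega
      have hjn : j < n + 1 := by omega
      have h := hE ⟨i, hin⟩ ⟨j, hjn⟩
      have : ∀ r, lam r * B1D n (x r) ⟨i, hin⟩ ⟨j, hjn⟩ = lam r * x r ^ q := by
        intro r
        have hB : B1D n (x r) ⟨i, hin⟩ ⟨j, hjn⟩ = x r ^ q := by
          simp only [B1D, hmod]
          rw [if_pos ⟨hi', hj'⟩]
          simp only [if_true]
          rw [mul_assoc, ← pow_add, ← pow_succ', hij]
        rw [hB]
      rwa [Finset.sum_congr rfl fun r _ => this r] at h
    have hbot : ∑ r, lam r * (1 - x r) = 0 := by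
      have hkn : n / 2 + 1 < n + 1 := by omega
      have h := hE ⟨n / 2 + 1, hkn⟩ ⟨n / 2 + 1, hkn⟩
      have : ∀ r, lam r * B1D n (x r) ⟨n / 2 + 1, hkn⟩ ⟨n / 2 + 1, hkn⟩
          = lam r * (1 - x r) := by
        intro r
        have hB : B1D n (x r) ⟨n / 2 + 1, hkn⟩ ⟨n / 2 + 1, hkn⟩ = 1 - x r := by
          simp only [B1D, hmod]
          rw [if_neg (by omega), if_pos ⟨le_rfl, le_rfl⟩]
          simp
        rw [hB]
      rwa [Finset.sum_congr rfl fun r _ => this r] at h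
    intro p hp
    rcases Nat.eq_zero_or_pos p with rfl | hp1
    · have h1 : ∑ r, lam r * x r ^ 1 = 0 := htop 1 le_rfl (by omega)
      have : ∑ r, lam r * (1 - x r) = (∑ r, lam r * x r ^ 0) - ∑ r, lam r * x r ^ 1 := by
        rw [← Finset.sum_sub_distrib]
        apply Finset.sum_congr rfl
        intro r _
        ring
      rw [this, h1, sub_zero] at hbot
      exact hbot
    · exact htop p hp1 hp

theorem localizing_matrices_1D_linearly_independent
    (n : ℕ) (x : Fin (n + 1) → ℝ)
    (hinj : Function.Injective x)
    (hmem : ∀ r, x r ∈ Set.Icc (0 : ℝ) 1) :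
    LinearIndependent ℝ (fun r => B1D n (x r)) := by
  rw [Fintype.linearIndependent_iff]
  intro lam hsum
  have hE : ∀ i j : Fin (n + 1), ∑ r, lam r * B1D n (x r) i j = 0 := by
    intro i j
    have := congrFun (congrFun hsum i) j
    simpa [Matrix.sum_apply] using this
  have hkey := B1D_key n x lam hE
  have hzero : lam = 0 := by
    apply Matrix.eq_zero_of_forall_pow_sum_mul_pow_eq_zero hinj
    intro i
    exact hkey (i : ℕ) (Nat.lt_succ_iff.mp i.isLt)
  intro r
  exact congrFun hzero r
end
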